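/- Let d ≥ 1, β ∈ (0,1], and T > 0. Let u : [0,T] × ℝ^d → ℝ^d be continuous, continuously differentiable in the space variable, with s ↦ ‖D_x u(s,·)‖_{L^∞} and s ↦ [D_x u(s,·)]_{C^β} integrable on [0,T]. Let X : [0,T] × ℝ^d → ℝ^d satisfy X(0,ξ) = ξ and ∂_t X(t,ξ) = u(t, X(t,ξ)), assume ξ ↦ X(t,ξ) is differentiable for each t with spatial derivative ∇_ξ X satisfying the variational equation ∂_t ∇_ξ X(t,ξ) = D_x u(t, X(t,ξ)) ∘ ∇_ξ X(t,ξ), and assume t ↦ ∇_ξ X(t,ξ) is continuous. Then there exists a constant C depending only on β such that for every t ∈ [0,T], the β-Hölder seminorm of ξ ↦ ∇_ξ X(t,ξ) satisfies [∇_ξ X(t,·)]_{C^β} ≤ exp( C ∫_0^t ( ‖D_x u(s,·)‖_{L^∞} + [D_x u(s,·)]_{C^β} ) ds ). -/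

import Mathlib

/-!
Write `G(t) = ∫₀ᵗ h` and `B(t) = ∫₀ᵗ H`. By Grönwall's inequality the flow `X(t, ·)` is
Lipschitz with constant `e^{G(t)}` and its derivative is bounded by `e^{G(t)}`. The difference
`DX(t, x) - DX(t, y)` solves a linear equation driven by `D_x u(t, X(t, x))` with forcing
`(D_x u(t, X(t, x)) - D_x u(t, X(t, y))) ∘ DX(t, y)`, which by the Hölder bound has norm at most
`H(t) |x - y|^β e^{2 G(t)}`; Grönwall once more gives
`|DX(t, x) - DX(t, y)| ≤ |x - y|^β B(t) e^{3 G(t)} ≤ e^{3 (G(t) + B(t))} |x - y|^β`.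

The coefficients are only integrable in time, so Grönwall's inequality is proved through the
fundamental theorem of calculus for absolutely continuous functions, applied to the nonincreasing
function `(a + ∫₀ʳ g f) e^{-∫₀ʳ g}`.
-/
open MeasureTheory Set intervalIntegral Real
open scoped NNReal

theorem LipschitzOnWith.comp_absolutelyContinuousOnInterval {X Y : Type*} [PseudoMetricSpace X]
    [PseudoMetricSpace Y] {φ : X → Y} {K : ℝ≥0} {s : Set X} {f : ℝ → X} {a b : ℝ}
    (hφ : LipschitzOnWith K φ s) (hf : AbsolutelyContinuousOnInterval f a b)
    (hfs : MapsTo f (uIcc a b) s) : AbsolutelyContinuousOnInterval (φ ∘ f) a b := by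
  have hK := Filter.Tendsto.const_mul (K : ℝ) hf
  rw [mul_zero] at hK
  refine squeeze_zero' (.of_forall fun _ => Finset.sum_nonneg fun _ _ => dist_nonneg) ?_ hK
  filter_upwards [Filter.mem_inf_of_right (Filter.mem_principal_self _)] with E hE
  rw [Finset.mul_sum]
  exact Finset.sum_le_sum fun i hi =>
    hφ.dist_le_mul _ (hfs (hE.1 i hi).1) _ (hfs (hE.1 i hi).2)

theorem lipschitzOnWith_exp_Iic_zero : LipschitzOnWith 1 exp (Iic 0) :=
  (convex_Iic 0).lipschitzOnWith_of_nnnorm_deriv_le (fun x _ => differentiableAt_exp)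
    fun x hx => by
      rw [Real.deriv_exp, ← NNReal.coe_le_coe, coe_nnnorm, norm_of_nonneg (exp_pos x).le]
      exact exp_le_one_iff.2 hx

theorem le_mul_exp_integral_of_le_add_integral {f g : ℝ → ℝ} {a t : ℝ} (ht : 0 ≤ t)
    (hg : IntervalIntegrable g volume 0 t) (hg0 : ∀ s ∈ Icc 0 t, 0 ≤ g s)
    (hgf : IntervalIntegrable (fun s => g s * f s) volume 0 t)
    (hf : ∀ r ∈ Icc 0 t, f r ≤ a + ∫ s in 0..r, g s * f s) :
    f t ≤ a * exp (∫ s in 0..t, g s) := by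
  set G := fun r => ∫ s in 0..r, g s
  set R := fun r => ∫ s in 0..r, g s * f s
  have h0 : (0 : ℝ) ∈ uIcc 0 t := left_mem_uIcc
  have hG_nonneg : MapsTo (fun r => -G r) (uIcc 0 t) (Iic 0) := fun r hr => by
    rw [uIcc_of_le ht] at hr
    exact neg_nonpos.2 (integral_nonneg hr.1 fun s hs => hg0 s ⟨hs.1, hs.2.trans hr.2⟩)
  have hE : AbsolutelyContinuousOnInterval (fun r => exp (-G r)) 0 t :=
    lipschitzOnWith_exp_Iic_zero.comp_absolutelyContinuousOnInterval
      (hg.absolutelyContinuousOnInterval_intervalIntegral h0).neg hG_nonneg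
  set φ := fun r => a * exp (-G r) + R r * exp (-G r)
  have hφ : AbsolutelyContinuousOnInterval φ 0 t :=
    (hE.const_mul a).add ((hgf.absolutelyContinuousOnInterval_intervalIntegral h0).mul hE)
  have hφ' : ∀ᵐ r, r ∈ Ioc 0 t → deriv φ r ≤ 0 := by
    filter_upwards [hg.ae_hasDerivAt_integral, hgf.ae_hasDerivAt_integral] with r hGr hRr hr
    have hr' : r ∈ Icc 0 t := Ioc_subset_Icc_self hr
    rw [← uIcc_of_le ht] at hr'
    have hEr : HasDerivAt (fun r => exp (-G r)) (exp (-G r) * -g r) r :=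
      (hGr hr' 0 h0).neg.exp
    have hφr : HasDerivAt φ (a * (exp (-G r) * -g r) + (g r * f r * exp (-G r)
        + R r * (exp (-G r) * -g r))) r := (hEr.const_mul a).add ((hRr hr' 0 h0).mul hEr)
    rw [uIcc_of_le ht] at hr'
    have hfr : f r ≤ a + R r := hf r hr'
    rw [hφr.deriv, show a * (exp (-G r) * -g r) + (g r * f r * exp (-G r)
        + R r * (exp (-G r) * -g r)) = g r * exp (-G r) * (f r - (a + R r)) by ring]
    exact mul_nonpos_of_nonneg_of_nonpos (mul_nonneg (hg0 r hr') (exp_pos _).le) (by linarith)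
  have hφt : φ t ≤ a := by
    have hint : ∫ r in 0..t, deriv φ r ≤ 0 := by
      rw [integral_of_le ht]
      exact setIntegral_nonpos_ae measurableSet_Ioc hφ'
    have hφ0 : φ 0 = a := by simp [φ, G, R]
    linarith [hφ.integral_deriv_eq_sub]
  calc f t ≤ a + R t := hf t ⟨ht, le_rfl⟩
    _ = φ t * exp (G t) := by
      rw [show φ t = (a + R t) * exp (-G t) by ring, mul_assoc, ← exp_add, neg_add_cancel,
        exp_zero, mul_one]
    _ ≤ a * exp (G t) := mul_le_mul_of_nonneg_right hφt (exp_pos _).le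

theorem integral_mono_upper_of_nonneg {f : ℝ → ℝ} {t T : ℝ} (ht : t ∈ Icc 0 T)
    (hf : IntervalIntegrable f volume 0 T) (hf0 : ∀ s ∈ Icc 0 T, 0 ≤ f s) :
    ∫ s in 0..t, f s ≤ ∫ s in 0..T, f s :=
  integral_mono_interval le_rfl ht.1 ht.2
    ((ae_restrict_iff' measurableSet_Ioc).2 (.of_forall fun s hs => hf0 s (Ioc_subset_Icc_self hs)))
    hf

theorem IntervalIntegrable.mono_upper {E : Type*} [NormedAddCommGroup E] {f : ℝ → E} {t T : ℝ}
    (hf : IntervalIntegrable f volume 0 T) (ht : t ∈ Icc 0 T) : IntervalIntegrable f volume 0 t :=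
  hf.mono_set (uIcc_subset_uIcc_left (mem_uIcc_of_le ht.1 ht.2))

theorem intervalIntegrable_of_hasDerivAt_of_norm_le {E : Type*} [NormedAddCommGroup E]
    [NormedSpace ℝ E] [CompleteSpace E] {v w : ℝ → E} {b : ℝ → ℝ} {a c : ℝ} (hac : a ≤ c)
    (hv : ∀ s ∈ Icc a c, HasDerivAt v (w s) s) (hb : IntervalIntegrable b volume a c)
    (hw : ∀ s ∈ Icc a c, ‖w s‖ ≤ b s) : IntervalIntegrable w volume a c := by
  rw [intervalIntegrable_iff_integrableOn_Icc_of_le hac] at hb ⊢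
  have hmeas : AEStronglyMeasurable w (volume.restrict (Icc a c)) :=
    (stronglyMeasurable_deriv v).aestronglyMeasurable.congr <|
      (ae_restrict_iff' measurableSet_Icc).2 (.of_forall fun s hs => (hv s hs).deriv)
  exact hb.mono' hmeas ((ae_restrict_iff' measurableSet_Icc).2 (.of_forall hw))

theorem norm_le_mul_exp_of_norm_deriv_le_mul_add {E : Type*} [NormedAddCommGroup E]
    [NormedSpace ℝ E] [CompleteSpace E] {v w : ℝ → E} {g k : ℝ → ℝ} {T : ℝ}
    (hv : ∀ s ∈ Icc 0 T, HasDerivAt v (w s) s)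
    (hg : IntervalIntegrable g volume 0 T) (hg0 : ∀ s ∈ Icc 0 T, 0 ≤ g s)
    (hk : IntervalIntegrable k volume 0 T) (hk0 : ∀ s ∈ Icc 0 T, 0 ≤ k s)
    (hw : ∀ s ∈ Icc 0 T, ‖w s‖ ≤ g s * ‖v s‖ + k s) :
    ∀ t ∈ Icc 0 T, ‖v t‖ ≤ (‖v 0‖ + ∫ s in 0..t, k s) * exp (∫ s in 0..t, g s) := by
  intro t ht
  have hT : 0 ≤ T := ht.1.trans ht.2
  have hvc : ContinuousOn v (Icc 0 T) := fun s hs => (hv s hs).continuousAt.continuousWithinAt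
  have hgv : IntervalIntegrable (fun s => g s * ‖v s‖) volume 0 T :=
    hg.mul_continuousOn (by rw [uIcc_of_le hT]; exact hvc.norm)
  have hw_int : IntervalIntegrable w volume 0 T :=
    intervalIntegrable_of_hasDerivAt_of_norm_le hT hv (hgv.add hk) hw
  have hbound : ∀ r ∈ Icc 0 t,
      ‖v r‖ ≤ (‖v 0‖ + ∫ s in 0..t, k s) + ∫ s in 0..r, g s * ‖v s‖ := by
    intro r hr
    have hr' : r ∈ Icc 0 T := ⟨hr.1, hr.2.trans ht.2⟩
    have hftc : ∫ s in 0..r, w s = v r - v 0 :=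
      integral_eq_sub_of_hasDerivAt
        (fun s hs => hv s (by rw [uIcc_of_le hr.1] at hs; exact ⟨hs.1, hs.2.trans hr'.2⟩))
        (hw_int.mono_upper hr')
    calc ‖v r‖ ≤ ‖v 0‖ + ‖v r - v 0‖ := norm_le_insert' _ _
      _ ≤ ‖v 0‖ + ∫ s in 0..r, ‖w s‖ := by
        rw [← hftc]; gcongr; exact norm_integral_le_integral_norm hr.1
      _ ≤ ‖v 0‖ + ∫ s in 0..r, (g s * ‖v s‖ + k s) := by
        gcongr
        exact integral_mono_on hr.1 ((hw_int.mono_upper hr').norm)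
          ((hgv.add hk).mono_upper hr') fun s hs => hw s ⟨hs.1, hs.2.trans hr'.2⟩
      _ = (‖v 0‖ + ∫ s in 0..r, k s) + ∫ s in 0..r, g s * ‖v s‖ := by
        rw [integral_add (hgv.mono_upper hr') (hk.mono_upper hr')]
        ring
      _ ≤ (‖v 0‖ + ∫ s in 0..t, k s) + ∫ s in 0..r, g s * ‖v s‖ := by
        gcongr
        exact integral_mono_upper_of_nonneg hr (hk.mono_upper ht)
          fun s hs => hk0 s ⟨hs.1, hs.2.trans ht.2⟩
  exact le_mul_exp_integral_of_le_add_integral ht.1 (hg.mono_upper ht)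
    (fun s hs => hg0 s ⟨hs.1, hs.2.trans ht.2⟩) (hgv.mono_upper ht) hbound

theorem norm_le_mul_exp_of_norm_deriv_le_mul {E : Type*} [NormedAddCommGroup E]
    [NormedSpace ℝ E] [CompleteSpace E] {v w : ℝ → E} {g : ℝ → ℝ} {T : ℝ}
    (hv : ∀ s ∈ Icc 0 T, HasDerivAt v (w s) s)
    (hg : IntervalIntegrable g volume 0 T) (hg0 : ∀ s ∈ Icc 0 T, 0 ≤ g s)
    (hw : ∀ s ∈ Icc 0 T, ‖w s‖ ≤ g s * ‖v s‖) :
    ∀ t ∈ Icc 0 T, ‖v t‖ ≤ ‖v 0‖ * exp (∫ s in 0..t, g s) := by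
  simpa using norm_le_mul_exp_of_norm_deriv_le_mul_add hv hg hg0
    (intervalIntegrable_const (c := (0 : ℝ))) (fun _ _ => le_rfl) (by simpa using hw)

theorem ContinuousLinearMap.norm_comp_sub_comp_le {E F G : Type*} [NormedAddCommGroup E]
    [NormedAddCommGroup F] [NormedAddCommGroup G] [NormedSpace ℝ E] [NormedSpace ℝ F]
    [NormedSpace ℝ G] (A B : F →L[ℝ] G) (P Q : E →L[ℝ] F) :
    ‖A.comp P - B.comp Q‖ ≤ ‖A‖ * ‖P - Q‖ + ‖A - B‖ * ‖Q‖ := by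
  rw [show A.comp P - B.comp Q = A.comp (P - Q) + (A - B).comp Q by
    rw [comp_sub, sub_comp]; abel]
  exact (norm_add_le _ _).trans (add_le_add (opNorm_comp_le _ _) (opNorm_comp_le _ _))

theorem nonneg_of_norm_sub_le_mul_rpow {E F : Type*} [NormedAddCommGroup E] [Nontrivial E]
    [SeminormedAddCommGroup F] {φ : E → F} {c β : ℝ}
    (hφ : ∀ x y, ‖φ x - φ y‖ ≤ c * ‖x - y‖ ^ β) : 0 ≤ c := by
  obtain ⟨z, hz⟩ := exists_ne (0 : E)
  have hc := (norm_nonneg _).trans (hφ z 0)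
  rw [sub_zero] at hc
  exact nonneg_of_mul_nonneg_left hc (rpow_pos_of_pos (norm_pos_iff.2 hz) β)

section Flow

variable {E : Type*} [NormedAddCommGroup E] [NormedSpace ℝ E] [CompleteSpace E]
  {u X : ℝ → E → E} {A : ℝ → E → E →L[ℝ] E} {DX : ℝ → E → E →L[ℝ] E} {h H : ℝ → ℝ} {T : ℝ}

theorem norm_flow_sub_le_mul_exp (hh : IntervalIntegrable h volume 0 T)
    (hh0 : ∀ s ∈ Icc 0 T, 0 ≤ h s) (hu : ∀ s ∈ Icc 0 T, ∀ p q, ‖u s p - u s q‖ ≤ h s * ‖p - q‖)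
    (hX : ∀ ξ, ∀ t ∈ Icc 0 T, HasDerivAt (fun s => X s ξ) (u t (X t ξ)) t) (x y : E) :
    ∀ t ∈ Icc 0 T, ‖X t x - X t y‖ ≤ ‖X 0 x - X 0 y‖ * exp (∫ s in 0..t, h s) :=
  norm_le_mul_exp_of_norm_deriv_le_mul (fun s hs => (hX x s hs).sub (hX y s hs)) hh hh0
    fun s hs => hu s hs _ _

theorem norm_linearizedFlow_le_mul_exp (hh : IntervalIntegrable h volume 0 T)
    (hh0 : ∀ s ∈ Icc 0 T, 0 ≤ h s) (hA : ∀ s ∈ Icc 0 T, ∀ p, ‖A s p‖ ≤ h s) {ξ : E}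
    (hDX : ∀ t ∈ Icc 0 T, HasDerivAt (fun s => DX s ξ) ((A t (X t ξ)).comp (DX t ξ)) t) :
    ∀ t ∈ Icc 0 T, ‖DX t ξ‖ ≤ ‖DX 0 ξ‖ * exp (∫ s in 0..t, h s) :=
  norm_le_mul_exp_of_norm_deriv_le_mul hDX hh hh0 fun s hs =>
    (ContinuousLinearMap.opNorm_comp_le _ _).trans (by gcongr; exact hA s hs _)

theorem norm_linearizedFlow_sub_le {β : ℝ} {x y : E} (hβ : β ∈ Ioc 0 1)
    (hh : IntervalIntegrable h volume 0 T) (hh0 : ∀ s ∈ Icc 0 T, 0 ≤ h s)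
    (hH : IntervalIntegrable H volume 0 T) (hH0 : ∀ s ∈ Icc 0 T, 0 ≤ H s)
    (hA : ∀ s ∈ Icc 0 T, ∀ p, ‖A s p‖ ≤ h s)
    (hAH : ∀ s ∈ Icc 0 T, ∀ p q, ‖A s p - A s q‖ ≤ H s * ‖p - q‖ ^ β)
    (hDX : ∀ ξ, ∀ t ∈ Icc 0 T, HasDerivAt (fun s => DX s ξ) ((A t (X t ξ)).comp (DX t ξ)) t)
    (hDX0 : DX 0 x = DX 0 y)
    (hXxy : ∀ s ∈ Icc 0 T, ‖X s x - X s y‖ ≤ ‖x - y‖ * exp (∫ r in 0..s, h r))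
    (hDXy : ∀ s ∈ Icc 0 T, ‖DX s y‖ ≤ exp (∫ r in 0..s, h r)) :
    ∀ t ∈ Icc 0 T,
      ‖DX t x - DX t y‖ ≤ ‖x - y‖ ^ β * (∫ s in 0..t, H s) * exp (3 * ∫ s in 0..t, h s) := by
  intro t ht
  set G := ∫ s in 0..t, h s
  have hsub : Icc 0 t ⊆ Icc 0 T := Icc_subset_Icc_right ht.2
  have hGs : ∀ s ∈ Icc 0 t, 0 ≤ ∫ r in 0..s, h r ∧ ∫ r in 0..s, h r ≤ G := fun s hs =>
    ⟨integral_nonneg hs.1 fun r hr => hh0 r (hsub ⟨hr.1, hr.2.trans hs.2⟩),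
      integral_mono_upper_of_nonneg hs (hh.mono_upper ht)
        fun r hr => hh0 r (hsub hr)⟩
  have hdefect : ∀ s ∈ Icc 0 t, ‖X s x - X s y‖ ^ β * ‖DX s y‖ ≤ ‖x - y‖ ^ β * exp (2 * G) := by
    intro s hs
    obtain ⟨hGs0, hGsG⟩ := hGs s hs
    have hX' : ‖X s x - X s y‖ ^ β ≤ ‖x - y‖ ^ β * exp G := by
      calc ‖X s x - X s y‖ ^ β ≤ (‖x - y‖ * exp (∫ r in 0..s, h r)) ^ β := by
            gcongr
            exacts [hβ.1.le, hXxy s (hsub hs)]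
        _ = ‖x - y‖ ^ β * exp ((∫ r in 0..s, h r) * β) := by
            rw [mul_rpow (norm_nonneg _) (exp_pos _).le, exp_mul]
        _ ≤ ‖x - y‖ ^ β * exp G := by
            gcongr; nlinarith [hβ.1, hβ.2]
    calc ‖X s x - X s y‖ ^ β * ‖DX s y‖ ≤ (‖x - y‖ ^ β * exp G) * exp G := by
          gcongr; exact (hDXy s (hsub hs)).trans (exp_le_exp.2 hGsG)
      _ = ‖x - y‖ ^ β * exp (2 * G) := by rw [two_mul, exp_add]; ring
  have hbound := norm_le_mul_exp_of_norm_deriv_le_mul_add (T := t) (v := fun s => DX s x - DX s y)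
    (k := fun s => H s * (‖x - y‖ ^ β * exp (2 * G)))
    (fun s hs => (hDX x s (hsub hs)).sub (hDX y s (hsub hs))) (hh.mono_upper ht)
    (fun s hs => hh0 s (hsub hs)) ((hH.mono_upper ht).mul_const _)
    (fun s hs => mul_nonneg (hH0 s (hsub hs)) (by positivity)) (fun s hs => by
      refine (ContinuousLinearMap.norm_comp_sub_comp_le _ _ _ _).trans (add_le_add ?_ ?_)
      · gcongr; exact hA s (hsub hs) _
      · calc ‖A s (X s x) - A s (X s y)‖ * ‖DX s y‖
            ≤ H s * ‖X s x - X s y‖ ^ β * ‖DX s y‖ := by gcongr; exact hAH s (hsub hs) _ _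
          _ ≤ H s * (‖x - y‖ ^ β * exp (2 * G)) := by
            rw [mul_assoc]; exact mul_le_mul_of_nonneg_left (hdefect s hs) (hH0 s (hsub hs)))
    t ⟨ht.1, le_rfl⟩
  rw [hDX0, sub_self, norm_zero, zero_add, intervalIntegral.integral_mul_const] at hbound
  calc ‖DX t x - DX t y‖ ≤ (∫ s in 0..t, H s) * (‖x - y‖ ^ β * exp (2 * G)) * exp G := hbound
    _ = ‖x - y‖ ^ β * (∫ s in 0..t, H s) * exp (3 * G) := by
      rw [show 3 * G = 2 * G + G by ring, exp_add]; ring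

end Flow

/-- The spatial derivative of the flow of a velocity field that is `C^{1,β}` in space,
uniformly integrably in time, remains `β`-Hölder: there is a constant `C = C(β)` with
`[∇_ξ X(t,·)]_{C^β} ≤ exp(C ∫_0^t (‖D_x u(s)‖_∞ + [D_x u(s)]_{C^β}) ds)`. -/
theorem flow_derivative_holder (β : ℝ) (hβ : β ∈ Ioc (0:ℝ) 1) :
    ∃ C : ℝ, 0 < C ∧
      ∀ (d : ℕ), 1 ≤ d → ∀ (T : ℝ), 0 < T →
      ∀ (u X : ℝ → EuclideanSpace ℝ (Fin d) → EuclideanSpace ℝ (Fin d))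
        (DX : ℝ → EuclideanSpace ℝ (Fin d) →
          (EuclideanSpace ℝ (Fin d) →L[ℝ] EuclideanSpace ℝ (Fin d)))
        (h H : ℝ → ℝ),
        Continuous (fun p : ℝ × EuclideanSpace ℝ (Fin d) => u p.1 p.2) →
        (∀ s ∈ Icc 0 T, ContDiff ℝ 1 (u s)) →
        IntegrableOn h (Icc 0 T) →
        IntegrableOn H (Icc 0 T) →
        (∀ s ∈ Icc 0 T, ∀ x, ‖fderiv ℝ (u s) x‖ ≤ h s) →
        (∀ s ∈ Icc 0 T, ∀ x y, ‖fderiv ℝ (u s) x - fderiv ℝ (u s) y‖ ≤ H s * ‖x - y‖ ^ β) →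
        (∀ ξ, X 0 ξ = ξ) →
        (∀ ξ, ∀ t ∈ Icc 0 T, HasDerivAt (fun s => X s ξ) (u t (X t ξ)) t) →
        (∀ t ∈ Icc 0 T, ∀ ξ, HasFDerivAt (X t) (DX t ξ) ξ) →
        (∀ ξ, ∀ t ∈ Icc 0 T, HasDerivAt (fun s => DX s ξ)
            ((fderiv ℝ (u t) (X t ξ)).comp (DX t ξ)) t) →
        (∀ ξ, Continuous fun t => DX t ξ) →
        ∀ t ∈ Icc 0 T, ∀ x y,
          ‖DX t x - DX t y‖
            ≤ Real.exp (C * ∫ s in (0:ℝ)..t, (h s + H s)) * ‖x - y‖ ^ β := by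
  refine ⟨3, by norm_num, fun d hd T hT u X DX h H _ hu hh hH hDu hHol hX0 hX hXD hDX _ t ht x y =>
    ?_⟩
  have : Nonempty (Fin d) := ⟨⟨0, hd⟩⟩
  rw [← intervalIntegrable_iff_integrableOn_Icc_of_le hT.le] at hh hH
  have hh0 : ∀ s ∈ Icc 0 T, 0 ≤ h s := fun s hs => (norm_nonneg _).trans (hDu s hs 0)
  have hH0 : ∀ s ∈ Icc 0 T, 0 ≤ H s := fun s hs => nonneg_of_norm_sub_le_mul_rpow (hHol s hs)
  have hLip : ∀ s ∈ Icc 0 T, ∀ p q, ‖u s p - u s q‖ ≤ h s * ‖p - q‖ := fun s hs p q =>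
    convex_univ.norm_image_sub_le_of_norm_fderiv_le
      (fun z _ => ((hu s hs).differentiable one_ne_zero).differentiableAt)
      (fun z _ => hDu s hs z) (mem_univ q) (mem_univ p)
  have hDX0 : ∀ ξ, DX 0 ξ = ContinuousLinearMap.id ℝ _ := fun ξ =>
    (hXD 0 ⟨le_rfl, hT.le⟩ ξ).unique (by rw [show X 0 = id from funext hX0]; exact hasFDerivAt_id ξ)
  have hXxy : ∀ s ∈ Icc 0 T, ‖X s x - X s y‖ ≤ ‖x - y‖ * exp (∫ r in 0..s, h r) := by
    simpa only [hX0] using norm_flow_sub_le_mul_exp hh hh0 hLip hX x y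
  have hDXy : ∀ s ∈ Icc 0 T, ‖DX s y‖ ≤ exp (∫ r in 0..s, h r) := fun s hs =>
    (norm_linearizedFlow_le_mul_exp hh hh0 hDu (hDX y) s hs).trans <| by
      rw [hDX0]; exact mul_le_of_le_one_left (exp_pos _).le ContinuousLinearMap.norm_id_le
  calc ‖DX t x - DX t y‖ ≤ ‖x - y‖ ^ β * (∫ s in 0..t, H s) * exp (3 * ∫ s in 0..t, h s) :=
        norm_linearizedFlow_sub_le hβ hh hh0 hH hH0 hDu hHol hDX (by rw [hDX0, hDX0]) hXxy hDXy t ht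
    _ ≤ ‖x - y‖ ^ β * exp (3 * ∫ s in 0..t, H s) * exp (3 * ∫ s in 0..t, h s) := by
        have hB : 0 ≤ ∫ s in 0..t, H s :=
          integral_nonneg ht.1 fun s hs => hH0 s ⟨hs.1, hs.2.trans ht.2⟩
        gcongr
        linarith [add_one_le_exp (3 * ∫ s in 0..t, H s)]
    _ = exp (3 * ∫ s in 0..t, (h s + H s)) * ‖x - y‖ ^ β := by
        rw [integral_add (hh.mono_upper ht) (hH.mono_upper ht),
          mul_add, exp_add]
        ring
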